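/- The submonoid of Thompson's group F generated by x₀, x₁, x₁⁻¹ is the free product of the free submonoid generated by x₀ and the subgroup generated by x₁. Concretely: the canonical monoid homomorphism from the monoid coproduct (Monoid.Coprod) of the free monoid on one generator (FreeMonoid Unit) and the infinite cyclic group (Multiplicative ℤ) to F, sending the free monoid generator to x₀ and the generator of Multiplicative ℤ to x₁, is injective. -/

import Mathlib

noncomputable section

def bPerm : Equiv.Perm ℝ where
  toFun t := if t ≤ 0 then t else if t ≤ 2 then t / 2 else t - 1
  invFun t := if t ≤ 0 then t else if t ≤ 1 then 2 * t else t + 1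
  left_inv t := by dsimp only; split_ifs <;> linarith
  right_inv t := by dsimp only; split_ifs <;> linarith

def aPerm : Equiv.Perm ℝ := Equiv.addRight (-1 : ℝ)

lemma aPerm_apply (t : ℝ) : aPerm t = t - 1 := by
  simp [aPerm, sub_eq_add_neg]

lemma aPerm_symm_apply (t : ℝ) : aPerm⁻¹ t = t + 1 := by
  simp [aPerm]

lemma bPerm_apply (t : ℝ) :
    bPerm t = if t ≤ 0 then t else if t ≤ 2 then t / 2 else t - 1 := rfl

lemma bPerm_symm_apply (t : ℝ) :
    bPerm⁻¹ t = if t ≤ 0 then t else if t ≤ 1 then 2 * t else t + 1 := rfl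

lemma bPerm_nonpos {t : ℝ} (h : t ≤ 0) : bPerm t = t := by
  rw [bPerm_apply, if_pos h]

lemma bPerm_symm_nonpos {t : ℝ} (h : t ≤ 0) : bPerm⁻¹ t = t := by
  rw [bPerm_symm_apply, if_pos h]

lemma bPerm_mid {t : ℝ} (h0 : 0 < t) (h2 : t ≤ 2) : bPerm t = t / 2 := by
  rw [bPerm_apply, if_neg (by linarith), if_pos h2]

lemma bPerm_symm_mid {t : ℝ} (h0 : 0 < t) (h1 : t ≤ 1) : bPerm⁻¹ t = 2 * t := by
  rw [bPerm_symm_apply, if_neg (by linarith), if_pos h1]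

lemma bPerm_nonneg {t : ℝ} (h : 0 ≤ t) : 0 ≤ bPerm t := by
  rw [bPerm_apply]; split_ifs <;> linarith

lemma bPerm_symm_high {t : ℝ} (h : 1 ≤ t) : bPerm⁻¹ t = t + 1 := by
  rcases eq_or_lt_of_le h with h1 | h1
  · rw [bPerm_symm_apply, if_neg (by linarith), if_pos (le_of_eq h1.symm)]; linarith
  · rw [bPerm_symm_apply, if_neg (by linarith), if_neg (by linarith)]

lemma bPerm_symm_le_two {t : ℝ} (h : t ≤ 1) : bPerm⁻¹ t ≤ 2 := by
  rw [bPerm_symm_apply]; split_ifs <;> linarith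

/-- `b^n` fixes nonpositive reals. -/
lemma bZpow_nonpos (n : ℤ) {t : ℝ} (h : t ≤ 0) : (bPerm ^ n) t = t := by
  have hb : ∀ j : ℕ, (bPerm ^ j) t = t := by
    intro j; induction j with
    | zero => simp
    | succ k ih => rw [pow_succ, Equiv.Perm.mul_apply, bPerm_nonpos h, ih]
  have hbi : ∀ j : ℕ, (bPerm⁻¹ ^ j) t = t := by
    intro j; induction j with
    | zero => simp
    | succ k ih => rw [pow_succ, Equiv.Perm.mul_apply, bPerm_symm_nonpos h, ih]
  cases n with
  | ofNat j => rw [Int.ofNat_eq_coe, zpow_natCast]; exact hb j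
  | negSucc j => rw [zpow_negSucc, ← inv_pow]; exact hbi (j+1)

lemma bPow_small : ∀ (j : ℕ) {t : ℝ}, 0 < t → t ≤ 2 → (bPerm ^ j) t = t / 2 ^ j := by
  intro j
  induction j with
  | zero => intro t _ _; simp
  | succ k ih =>
    intro t h0 h2
    rw [pow_succ, Equiv.Perm.mul_apply, bPerm_mid h0 h2, ih (by linarith) (by linarith)]
    rw [pow_succ]; ring

lemma bInvPow_small : ∀ (j : ℕ) {t : ℝ}, 0 < t → 2 ^ j * t ≤ 2 → (bPerm⁻¹ ^ j) t = 2 ^ j * t := by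
  intro j
  induction j with
  | zero => intro t _ _; simp
  | succ k ih =>
    intro t h0 h2
    have hk : (1:ℝ) ≤ 2 ^ k := one_le_pow₀ (by norm_num)
    have ht1 : t ≤ 1 := by nlinarith [pow_succ (2:ℝ) k]
    rw [pow_succ _ k, Equiv.Perm.mul_apply, bPerm_symm_mid h0 ht1,
      ih (by linarith) (by nlinarith [pow_succ (2:ℝ) k])]
    ring

lemma bZpow_small (n : ℤ) : ∃ ε > (0:ℝ), ∀ t : ℝ, 0 < t → t ≤ ε →
    (bPerm ^ n) t = (2:ℝ) ^ (-n) * t := by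
  cases n with
  | ofNat j =>
    refine ⟨2, by norm_num, fun t h0 h2 => ?_⟩
    rw [Int.ofNat_eq_coe, zpow_natCast, bPow_small j h0 h2, zpow_neg, zpow_natCast]
    ring
  | negSucc j =>
    refine ⟨2 / 2 ^ (j+1), by positivity, fun t h0 h2 => ?_⟩
    have hp : (0:ℝ) < 2 ^ (j+1) := by positivity
    have hle : (2:ℝ) ^ (j+1) * t ≤ 2 := by
      calc (2:ℝ) ^ (j+1) * t ≤ 2 ^ (j+1) * (2 / 2 ^ (j+1)) :=
            mul_le_mul_of_nonneg_left h2 (le_of_lt hp)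
        _ = 2 := by field_simp
    rw [zpow_negSucc, ← inv_pow, bInvPow_small (j+1) h0 hle]
    have hn : -Int.negSucc j = ((j+1 : ℕ) : ℤ) := by simp [Int.negSucc_eq]
    rw [hn, zpow_natCast]

/-! ### The relators hold for `aPerm`, `bPerm` -/

lemma commute_of_support {A B : Equiv.Perm ℝ} {c : ℝ}
    (hA1 : ∀ t, c ≤ t → A t = t) (hA2 : ∀ t, t ≤ c → A t ≤ c)
    (hB1 : ∀ t, t ≤ c → B t = t) (hB2 : ∀ t, c ≤ t → c ≤ B t) : Commute A B := by
  apply Equiv.ext; intro t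
  rw [Equiv.Perm.mul_apply, Equiv.Perm.mul_apply]
  rcases le_total t c with ht | ht
  · rw [hB1 t ht, hB1 _ (hA2 t ht)]
  · rw [hA1 t ht, hA1 _ (hB2 t ht)]

lemma commute₁ : Commute (aPerm * bPerm⁻¹) (aPerm⁻¹ * bPerm * aPerm) := by
  have hA : ∀ t : ℝ, (aPerm * bPerm⁻¹) t = bPerm⁻¹ t - 1 := fun t => by
    simp [Equiv.Perm.mul_apply, aPerm_apply]
  have hB : ∀ t : ℝ, (aPerm⁻¹ * bPerm * aPerm) t = bPerm (t - 1) + 1 := fun t => by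
    simp [Equiv.Perm.mul_apply, aPerm_apply, aPerm_symm_apply]
  have hA1 : ∀ t : ℝ, 1 ≤ t → (aPerm * bPerm⁻¹) t = t := fun t ht => by
    rw [hA, bPerm_symm_high ht]; ring
  have hA2 : ∀ t : ℝ, t ≤ 1 → (aPerm * bPerm⁻¹) t ≤ 1 := fun t ht => by
    rw [hA]; have := bPerm_symm_le_two ht; linarith
  have hB1 : ∀ t : ℝ, t ≤ 1 → (aPerm⁻¹ * bPerm * aPerm) t = t := fun t ht => by
    rw [hB, bPerm_nonpos (by linarith)]; ring
  have hB2 : ∀ t : ℝ, 1 ≤ t → 1 ≤ (aPerm⁻¹ * bPerm * aPerm) t := fun t ht => by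
    rw [hB]; have := bPerm_nonneg (t := t - 1) (by linarith); linarith
  exact commute_of_support hA1 hA2 hB1 hB2

lemma commute₂ : Commute (aPerm * bPerm⁻¹) (aPerm⁻¹ ^ 2 * bPerm * aPerm ^ 2) := by
  have hA : ∀ t : ℝ, (aPerm * bPerm⁻¹) t = bPerm⁻¹ t - 1 := fun t => by
    simp [Equiv.Perm.mul_apply, aPerm_apply]
  have hC : ∀ t : ℝ, (aPerm⁻¹ ^ 2 * bPerm * aPerm ^ 2) t = bPerm (t - 2) + 2 := fun t => by
    simp [Equiv.Perm.mul_apply, pow_two, aPerm_apply, aPerm_symm_apply]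
    ring_nf
  have hA1 : ∀ t : ℝ, 1 ≤ t → (aPerm * bPerm⁻¹) t = t := fun t ht => by
    rw [hA, bPerm_symm_high ht]; ring
  have hA2 : ∀ t : ℝ, t ≤ 2 → (aPerm * bPerm⁻¹) t ≤ 2 := fun t ht => by
    rcases le_total t 1 with h | h
    · have := bPerm_symm_le_two h; rw [hA]; linarith
    · rw [hA, bPerm_symm_high h]; linarith
  have hC1 : ∀ t : ℝ, t ≤ 2 → (aPerm⁻¹ ^ 2 * bPerm * aPerm ^ 2) t = t := fun t ht => by
    rw [hC, bPerm_nonpos (by linarith)]; ring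
  have hC2 : ∀ t : ℝ, 2 ≤ t → 2 ≤ (aPerm⁻¹ ^ 2 * bPerm * aPerm ^ 2) t := fun t ht => by
    rw [hC]; have := bPerm_nonneg (t := t - 2) (by linarith); linarith
  exact commute_of_support (fun t ht => hA1 t (by linarith)) hA2 hC1 hC2

end

open scoped commutatorElement

/-- The two relators of Thompson's group `F` in the free group on two generators:
`[x₀x₁⁻¹, x₀⁻¹x₁x₀]` and `[x₀x₁⁻¹, x₀⁻²x₁x₀²]`. -/
def thompsonRels : Set (FreeGroup (Fin 2)) :=
  { ⁅FreeGroup.of (0 : Fin 2) * (FreeGroup.of (1 : Fin 2))⁻¹,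
      (FreeGroup.of (0 : Fin 2))⁻¹ * FreeGroup.of (1 : Fin 2) * FreeGroup.of (0 : Fin 2)⁆,
    ⁅FreeGroup.of (0 : Fin 2) * (FreeGroup.of (1 : Fin 2))⁻¹,
      (FreeGroup.of (0 : Fin 2))⁻¹ ^ 2 * FreeGroup.of (1 : Fin 2) * FreeGroup.of (0 : Fin 2) ^ 2⁆ }

/-- Thompson's group `F`, presented as
`⟨x₀, x₁ ∣ [x₀x₁⁻¹, x₀⁻¹x₁x₀] = 1, [x₀x₁⁻¹, x₀⁻²x₁x₀²] = 1⟩`. -/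
abbrev ThompsonF : Type := PresentedGroup thompsonRels

/-- The generators `x₀` and `x₁` of Thompson's group `F`. -/
noncomputable def thompsonX₀ : ThompsonF := PresentedGroup.of 0
noncomputable def thompsonX₁ : ThompsonF := PresentedGroup.of 1

noncomputable section

def fgen : Fin 2 → Equiv.Perm ℝ := ![aPerm, bPerm]

lemma rels_hold : ∀ r ∈ thompsonRels, FreeGroup.lift fgen r = 1 := by
  intro r hr
  rcases hr with rfl | rfl
  · rw [map_commutatorElement, commutatorElement_eq_one_iff_commute]
    simpa [fgen] using commute₁
  · rw [map_commutatorElement, commutatorElement_eq_one_iff_commute]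
    simpa [fgen] using commute₂

def φT : ThompsonF →* Equiv.Perm ℝ := PresentedGroup.toGroup rels_hold

lemma φT_x₀ : φT thompsonX₀ = aPerm := by
  simp [φT, thompsonX₀, PresentedGroup.toGroup.of, fgen]

lemma φT_x₁ : φT thompsonX₁ = bPerm := by
  simp [φT, thompsonX₁, PresentedGroup.toGroup.of, fgen]

end
noncomputable section
open Monoid Multiplicative

abbrev MM := Monoid.Coprod (FreeMonoid Unit) (Multiplicative ℤ)

def Φ : MM →* Equiv.Perm ℝ :=
  Monoid.Coprod.lift (FreeMonoid.lift fun _ => aPerm) (zpowersHom _ bPerm)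

def cnt : MM →* Multiplicative ℕ :=
  Monoid.Coprod.lift (FreeMonoid.lift fun _ => Multiplicative.ofAdd 1) 1

def aGen : MM := Monoid.Coprod.inl (FreeMonoid.of ())

lemma Φ_inr (n : Multiplicative ℤ) : Φ (Monoid.Coprod.inr n) = bPerm ^ n.toAdd := by
  simp [Φ, Monoid.Coprod.lift_apply_inr]

lemma Φ_aGen : Φ aGen = aPerm := by
  simp [Φ, aGen, Monoid.Coprod.lift_apply_inl]

lemma cnt_inr (n : Multiplicative ℤ) : cnt (Monoid.Coprod.inr n) = 1 := by
  simp [cnt, Monoid.Coprod.lift_apply_inr]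

lemma cnt_aGen : cnt aGen = ofAdd 1 := by
  simp [cnt, aGen, Monoid.Coprod.lift_apply_inl]

lemma Φ_inl_apply (m : FreeMonoid Unit) (s : ℝ) :
    Φ (Monoid.Coprod.inl m) s = s - ((cnt (Monoid.Coprod.inl m)).toAdd : ℝ) := by
  induction m using FreeMonoid.inductionOn' with
  | one => simp
  | of_mul x xs ih =>
    rcases x
    have h1 : (Monoid.Coprod.inl (FreeMonoid.of () * xs) : MM)
        = aGen * Monoid.Coprod.inl xs := map_mul _ _ _
    rw [h1, map_mul, map_mul, Equiv.Perm.mul_apply, Φ_aGen, cnt_aGen, aPerm_apply, ih,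
      toAdd_mul, toAdd_ofAdd]
    push_cast
    ring

/-- Every `Φ w` acts as translation by `-cnt w` on nonpositive reals. -/
lemma Φ_nonpos (w : MM) : ∀ t : ℝ, t ≤ 0 → Φ w t = t - ((cnt w).toAdd : ℝ) := by
  induction w using Monoid.Coprod.induction_on' with
  | one => intro t ht; simp
  | inl_mul m x ih =>
    intro t ht
    rw [map_mul, map_mul, Equiv.Perm.mul_apply, ih t ht, Φ_inl_apply]
    push_cast [toAdd_mul]
    ring
  | inr_mul n x ih =>
    intro t ht
    have hx : Φ x t ≤ 0 := by
      rw [ih t ht]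
      have : (0:ℝ) ≤ ((cnt x).toAdd : ℝ) := Nat.cast_nonneg _
      linarith
    rw [map_mul, map_mul, Equiv.Perm.mul_apply, ih t ht, Φ_inr,
      bZpow_nonpos _ (by rw [← ih t ht]; exact hx), cnt_inr, one_mul]

end
noncomputable section
open Monoid Multiplicative

/-- Right normal-form decomposition: every element of the coproduct is either `inr n`
or of the form `u * a * inr n`. -/
lemma decomp (w : MM) :
    (∃ n : Multiplicative ℤ, w = Monoid.Coprod.inr n) ∨
    (∃ (u : MM) (n : Multiplicative ℤ), w = u * aGen * Monoid.Coprod.inr n) := by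
  induction w using Monoid.Coprod.induction_on' with
  | one => exact Or.inl ⟨1, (map_one _).symm⟩
  | inl_mul m x ih =>
    induction m using FreeMonoid.inductionOn' with
    | one => simpa using ih
    | of_mul y ys ih2 =>
      rcases y
      have h1 : (Monoid.Coprod.inl (FreeMonoid.of () * ys) : MM) * x
          = aGen * (Monoid.Coprod.inl ys * x) := by
        rw [map_mul, mul_assoc]; rfl
      rw [h1]
      rcases ih2 with ⟨n, h⟩ | ⟨u, n, h⟩
      · exact Or.inr ⟨1, n, by rw [h, one_mul]⟩
      · exact Or.inr ⟨aGen * u, n, by rw [h, mul_assoc, mul_assoc, mul_assoc]⟩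
  | inr_mul n x ih =>
    rcases ih with ⟨m, h⟩ | ⟨u, m, h⟩
    · exact Or.inl ⟨n * m, by rw [h, ← map_mul]⟩
    · exact Or.inr ⟨Monoid.Coprod.inr n * u, m, by rw [h, mul_assoc, mul_assoc, mul_assoc]⟩

lemma germ_pure (n : Multiplicative ℤ) : ∃ ε > (0:ℝ), ∀ t, 0 < t → t ≤ ε →
    Φ (Monoid.Coprod.inr n) t = 2 ^ (-(n.toAdd)) * t := by
  obtain ⟨ε, hε, h⟩ := bZpow_small n.toAdd
  exact ⟨ε, hε, fun t h0 ht => by rw [Φ_inr]; exact h t h0 ht⟩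

lemma germ_comp (u : MM) (n : Multiplicative ℤ) : ∃ ε > (0:ℝ), ∀ t, 0 < t → t ≤ ε →
    Φ (u * aGen * Monoid.Coprod.inr n) t
      = 2 ^ (-(n.toAdd)) * t - (((cnt u).toAdd : ℝ) + 1) := by
  obtain ⟨ε₀, hε₀, h⟩ := bZpow_small n.toAdd
  have hpow : (0:ℝ) < 2 ^ n.toAdd := by positivity
  refine ⟨min ε₀ (2 ^ n.toAdd), lt_min hε₀ hpow, fun t h0 ht => ?_⟩
  have ht₀ : t ≤ ε₀ := le_trans ht (min_le_left _ _)
  have ht₁ : t ≤ 2 ^ n.toAdd := le_trans ht (min_le_right _ _)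
  have hs : (2:ℝ) ^ (-(n.toAdd)) * t ≤ 1 := by
    rw [zpow_neg]
    calc ((2:ℝ) ^ n.toAdd)⁻¹ * t ≤ (2 ^ n.toAdd)⁻¹ * 2 ^ n.toAdd := by
          apply mul_le_mul_of_nonneg_left ht₁ (by positivity)
      _ = 1 := inv_mul_cancel₀ (ne_of_gt hpow)
  rw [map_mul, map_mul, Equiv.Perm.mul_apply, Equiv.Perm.mul_apply, Φ_inr,
    h t h0 ht₀, Φ_aGen, aPerm_apply, Φ_nonpos u _ (by linarith)]
  ring

lemma two_zpow_inj : Function.Injective fun k : ℤ => (2:ℝ) ^ k :=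
  zpow_right_injective₀ (by norm_num) (by norm_num)

lemma Φ_injective : Function.Injective Φ := by
  have key : ∀ k : ℕ, ∀ u v : MM, (cnt u).toAdd = k → Φ u = Φ v → u = v := by
    intro k
    induction k using Nat.strong_induction_on with
    | _ k IH =>
    intro u v hk h
    have happ : ∀ t : ℝ, Φ u t = Φ v t := fun t => by rw [h]
    have hc : ((cnt u).toAdd : ℝ) = ((cnt v).toAdd : ℝ) := by
      have h1 := Φ_nonpos u 0 le_rfl
      have h2 := Φ_nonpos v 0 le_rfl
      have h3 := happ 0
      rw [h1, h2] at h3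
      linarith
    rcases decomp u with ⟨n, rfl⟩ | ⟨u', n, rfl⟩ <;> rcases decomp v with ⟨m, rfl⟩ | ⟨v', m, rfl⟩
    · -- pure / pure
      obtain ⟨ε₁, hε₁, g₁⟩ := germ_pure n
      obtain ⟨ε₂, hε₂, g₂⟩ := germ_pure m
      set t := min ε₁ ε₂ with htdef
      have ht0 : 0 < t := lt_min hε₁ hε₂
      have e1 := g₁ t ht0 (min_le_left _ _)
      have e2 := g₂ t ht0 (min_le_right _ _)
      have : (2:ℝ) ^ (-(n.toAdd)) * t = 2 ^ (-(m.toAdd)) * t := by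
        rw [← e1, ← e2]; exact happ t
      have hnm : -(n.toAdd) = -(m.toAdd) :=
        two_zpow_inj (mul_right_cancel₀ (ne_of_gt ht0) this)
      have : n = m := toAdd.injective (by omega)
      rw [this]
    · -- pure / composite : impossible by counts
      exfalso
      have c1 : ((cnt (Monoid.Coprod.inr n : MM)).toAdd : ℝ) = 0 := by
        rw [cnt_inr]; simp
      have c2 : ((cnt (v' * aGen * Monoid.Coprod.inr m)).toAdd : ℝ)
          = ((cnt v').toAdd : ℝ) + 1 := by
        have : cnt (v' * aGen * Monoid.Coprod.inr m) = cnt v' * cnt aGen * cnt (Monoid.Coprod.inr m) := by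
          rw [map_mul, map_mul]
        rw [this, cnt_aGen, cnt_inr, mul_one, toAdd_mul, toAdd_ofAdd]
        push_cast; ring
      rw [c1, c2] at hc
      have : (0:ℝ) ≤ ((cnt v').toAdd : ℝ) := Nat.cast_nonneg _
      linarith
    · -- composite / pure : impossible by counts
      exfalso
      have c1 : ((cnt (Monoid.Coprod.inr m : MM)).toAdd : ℝ) = 0 := by
        rw [cnt_inr]; simp
      have c2 : ((cnt (u' * aGen * Monoid.Coprod.inr n)).toAdd : ℝ)
          = ((cnt u').toAdd : ℝ) + 1 := by
        have : cnt (u' * aGen * Monoid.Coprod.inr n) = cnt u' * cnt aGen * cnt (Monoid.Coprod.inr n) := by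
          rw [map_mul, map_mul]
        rw [this, cnt_aGen, cnt_inr, mul_one, toAdd_mul, toAdd_ofAdd]
        push_cast; ring
      rw [c1, c2] at hc
      have : (0:ℝ) ≤ ((cnt u').toAdd : ℝ) := Nat.cast_nonneg _
      linarith
    · -- composite / composite
      have c1 : ((cnt (u' * aGen * Monoid.Coprod.inr n)).toAdd : ℝ)
          = ((cnt u').toAdd : ℝ) + 1 := by
        have : cnt (u' * aGen * Monoid.Coprod.inr n) = cnt u' * cnt aGen * cnt (Monoid.Coprod.inr n) := by
          rw [map_mul, map_mul]
        rw [this, cnt_aGen, cnt_inr, mul_one, toAdd_mul, toAdd_ofAdd]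
        push_cast; ring
      have c2 : ((cnt (v' * aGen * Monoid.Coprod.inr m)).toAdd : ℝ)
          = ((cnt v').toAdd : ℝ) + 1 := by
        have : cnt (v' * aGen * Monoid.Coprod.inr m) = cnt v' * cnt aGen * cnt (Monoid.Coprod.inr m) := by
          rw [map_mul, map_mul]
        rw [this, cnt_aGen, cnt_inr, mul_one, toAdd_mul, toAdd_ofAdd]
        push_cast; ring
      rw [c1, c2] at hc
      have hcnt : ((cnt u').toAdd : ℝ) = ((cnt v').toAdd : ℝ) := by linarith
      obtain ⟨ε₁, hε₁, g₁⟩ := germ_comp u' n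
      obtain ⟨ε₂, hε₂, g₂⟩ := germ_comp v' m
      set t := min ε₁ ε₂ with htdef
      have ht0 : 0 < t := lt_min hε₁ hε₂
      have e1 := g₁ t ht0 (min_le_left _ _)
      have e2 := g₂ t ht0 (min_le_right _ _)
      have heq : (2:ℝ) ^ (-(n.toAdd)) * t = 2 ^ (-(m.toAdd)) * t := by
        have := happ t
        rw [e1, e2] at this
        rw [hcnt] at this
        linarith
      have hnm : -(n.toAdd) = -(m.toAdd) :=
        two_zpow_inj (mul_right_cancel₀ (ne_of_gt ht0) heq)
      have hnm' : n = m := toAdd.injective (by omega)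
      subst hnm'
      -- cancel to get Φ u' = Φ v'
      have hΦ : Φ u' = Φ v' := by
        have h' := h
        rw [map_mul, map_mul, map_mul, map_mul] at h'
        exact mul_right_cancel (mul_right_cancel h')
      have hk' : (cnt u').toAdd < k := by
        have : ((cnt u').toAdd : ℝ) + 1 = (k : ℝ) := by rw [← c1, hk]
        have : (cnt u').toAdd + 1 = k := by exact_mod_cast this
        omega
      have := IH _ hk' u' v' rfl hΦ
      rw [this]
  intro u v h
  exact key _ u v rfl h

end
/-- The submonoid of Thompson's group `F` generated by `x₀, x₁, x₁⁻¹` is the free product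
of the free monoid on `x₀` and the subgroup generated by `x₁`: the canonical monoid
homomorphism from `FreeMonoid Unit ∗ Multiplicative ℤ` to `F` sending the free monoid
generator to `x₀` and the generator of `Multiplicative ℤ` to `x₁` is injective. -/
theorem thompson_submonoid_free_product :
    Function.Injective
      (Monoid.Coprod.lift
        (FreeMonoid.lift fun _ : Unit => thompsonX₀)
        (zpowersHom ThompsonF thompsonX₁)) := by
  set T := Monoid.Coprod.lift
      (FreeMonoid.lift fun _ : Unit => thompsonX₀)
      (zpowersHom ThompsonF thompsonX₁) with hT
  have key : (φT.comp T) = Φ := by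
    apply Monoid.Coprod.hom_ext
    · apply FreeMonoid.hom_eq
      intro x
      show φT (T (Monoid.Coprod.inl (FreeMonoid.of x))) = Φ (Monoid.Coprod.inl (FreeMonoid.of x))
      rcases x
      have h1 : Φ (Monoid.Coprod.inl (FreeMonoid.of ())) = aPerm := Φ_aGen
      rw [h1, hT, Monoid.Coprod.lift_apply_inl]
      simp [φT_x₀]
    · apply MonoidHom.ext_mint
      show φT (T (Monoid.Coprod.inr (Multiplicative.ofAdd 1))) = Φ (Monoid.Coprod.inr (Multiplicative.ofAdd 1))
      rw [Φ_inr, hT, Monoid.Coprod.lift_apply_inr]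
      simp [φT_x₁]
  intro u v huv
  apply Φ_injective
  rw [← key]
  simp only [MonoidHom.comp_apply, huv]
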